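/- arXiv:2411.15097 — 5 statements merged into one kernel-verified Lean document; each statement's English description precedes it below -/
import Mathlib

section
/- The determinant of the 5×5 matrix D with rows β₀, β_i, β_j, β_k, β_l and columns β_{ii}, β_{ik}, β_{il}, β_{jk}, β_{jl} of the second Jacobian matrix, i.e. D = [[½f_{ii}, f_{ik}, f_{il}, f_{jk}, f_{jl}], [f_i, f_k, f_l, 0, 0], [0, 0, 0, f_k, f_l], [0, f_i, 0, f_j, 0], [0, 0, f_i, 0, f_j]], equals f_i² · Q_{ij;kl}(F), for distinct indices i, j, k, l. -/
open MvPolynomial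

/-- First partial derivative f_i = ∂F/∂x_i. -/
noncomputable def pd {n : ℕ} (F : MvPolynomial (Fin n) ℂ) (i : Fin n) : MvPolynomial (Fin n) ℂ :=
  pderiv i F

/-- Second partial derivative f_{ij} = ∂²F/∂x_i∂x_j. -/
noncomputable def pd2 {n : ℕ} (F : MvPolynomial (Fin n) ℂ) (i j : Fin n) : MvPolynomial (Fin n) ℂ :=
  pderiv i (pderiv j F)

/-- Q_{ij;kl}(F) = f_{ik} f_j f_l − f_{jk} f_i f_l − f_{il} f_j f_k + f_{jl} f_i f_k. -/
noncomputable def Qq {n : ℕ} (F : MvPolynomial (Fin n) ℂ) (i j k l : Fin n) :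
    MvPolynomial (Fin n) ℂ :=
  pd2 F i k * pd F j * pd F l - pd2 F j k * pd F i * pd F l
    - pd2 F i l * pd F j * pd F k + pd2 F j l * pd F i * pd F k

/-- Second Jacobian matrix: rows β₀,…,β_n (row 0 = β₀, row t.succ = β_t);
columns β_{0k} (Sum.inl k) and β_{ij} (Sum.inr (i,j)). -/
noncomputable def jac2 {n : ℕ} (F : MvPolynomial (Fin n) ℂ) :
    Fin (n + 1) → (Fin n ⊕ Fin n × Fin n) → MvPolynomial (Fin n) ℂ := fun r col =>
  match col with
  | Sum.inl k => if r = 0 then pderiv k F else 0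
  | Sum.inr (i, j) =>
      if r = 0 then
        (if i = j then MvPolynomial.C (2⁻¹ : ℂ) * pderiv i (pderiv i F)
         else pderiv i (pderiv j F))
      else if r = i.succ then pderiv j F
      else if r = j.succ then pderiv i F
      else 0

/-- Jacobian ideal J₁(F) = (∂₁F, …, ∂_nF). -/
noncomputable def J1 {n : ℕ} (F : MvPolynomial (Fin n) ℂ) : Ideal (MvPolynomial (Fin n) ℂ) :=
  Ideal.span (Set.range fun i : Fin n => pderiv i F)

/-- The ideal Q(F) generated by all Q_{ij;kl}(F). -/
noncomputable def QI {n : ℕ} (F : MvPolynomial (Fin n) ℂ) : Ideal (MvPolynomial (Fin n) ℂ) :=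
  Ideal.span {q | ∃ i j k l : Fin n, q = Qq F i j k l}

/-- Second Jacobian ideal: ideal of maximal minors of Jac₂(F). -/
noncomputable def J2 {n : ℕ} (F : MvPolynomial (Fin n) ℂ) : Ideal (MvPolynomial (Fin n) ℂ) :=
  Ideal.span {d | ∃ c : Fin (n + 1) → (Fin n ⊕ Fin n × Fin n),
    d = Matrix.det (Matrix.of fun a b => jac2 F a (c b))}

set_option maxHeartbeats 1000000 in
lemma det5_aux {R : Type*} [CommRing R] (a b c d e p q r u v w x : R) :
    Matrix.det !![a, b, c, d, e; p, q, r, 0, 0; 0, 0, 0, u, v; 0, w, 0, x, 0; 0, 0, w, 0, x] =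
      (b * p * v * x * w - c * p * u * x * w - d * p * v * w ^ 2 + e * p * u * w ^ 2)
        + a * (-(q * (v * (x * w))) + r * (u * (w * x))) := by
  simp [Matrix.det_succ_row_zero, Fin.sum_univ_succ, Fin.succAbove, Fin.castSucc,
    Fin.castAdd, Fin.castLE]
  ring

theorem stmt6 {n : ℕ} (F : MvPolynomial (Fin n) ℂ) (i j k l : Fin n)
    (hij : i ≠ j) (hik : i ≠ k) (hil : i ≠ l) (hjk : j ≠ k) (hjl : j ≠ l) (hkl : k ≠ l) :
    Matrix.det !![MvPolynomial.C (2⁻¹ : ℂ) * pd2 F i i, pd2 F i k, pd2 F i l, pd2 F j k, pd2 F j l;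
        pd F i, pd F k, pd F l, 0, 0;
        0, 0, 0, pd F k, pd F l;
        0, pd F i, 0, pd F j, 0;
        0, 0, pd F i, 0, pd F j] = pd F i ^ 2 * Qq F i j k l := by
  rw [det5_aux]
  unfold Qq
  ring
end

section
/- The determinant of the 5×5 matrix D with rows β₀, β_i, β_j, β_k, β_l and columns β_{ij}, β_{ik}, β_{il}, β_{jk}, β_{jl} of the second Jacobian matrix, i.e. D = [[f_{ij}, f_{ik}, f_{il}, f_{jk}, f_{jl}], [f_j, f_k, f_l, 0, 0], [f_i, 0, 0, f_k, f_l], [0, f_i, 0, f_j, 0], [0, 0, f_i, 0, f_j]], equals 2 f_i f_j · Q_{ij;kl}(F), for distinct indices i, j, k, l. -/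
open MvPolynomial

theorem det_secondJacobianBlock {R : Type*} [CommRing R] (a b c d e p q r s : R) :
    Matrix.det !![a, b, c, d, e; q, r, s, 0, 0; p, 0, 0, r, s; 0, p, 0, q, 0; 0, 0, p, 0, q]
      = 2 * p * q * (b * q * s - d * p * s - c * q * r + e * p * r) := by
  simp [Matrix.det_succ_row_zero, Fin.sum_univ_succ, Fin.succAbove]
  ring

theorem stmt7_general {n : ℕ} (F : MvPolynomial (Fin n) ℂ) (i j k l : Fin n) :
    Matrix.det !![pd2 F i j, pd2 F i k, pd2 F i l, pd2 F j k, pd2 F j l;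
        pd F j, pd F k, pd F l, 0, 0;
        pd F i, 0, 0, pd F k, pd F l;
        0, pd F i, 0, pd F j, 0;
        0, 0, pd F i, 0, pd F j] = 2 * pd F i * pd F j * Qq F i j k l := by
  rw [det_secondJacobianBlock, Qq]

theorem stmt7 {n : ℕ} (F : MvPolynomial (Fin n) ℂ) (i j k l : Fin n)
    (hij : i ≠ j) (hik : i ≠ k) (hil : i ≠ l) (hjk : j ≠ k) (hjl : j ≠ l) (hkl : k ≠ l) :
    Matrix.det !![pd2 F i j, pd2 F i k, pd2 F i l, pd2 F j k, pd2 F j l;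
        pd F j, pd F k, pd F l, 0, 0;
        pd F i, 0, 0, pd F k, pd F l;
        0, pd F i, 0, pd F j, 0;
        0, 0, pd F i, 0, pd F j] = 2 * pd F i * pd F j * Qq F i j k l :=
  stmt7_general F i j k l
end

section
/- Let S be the square submatrix of the second Jacobian matrix Jac₂(F) with rows β_{i₁}, …, β_{i_r} (1 ≤ i₁ < ⋯ < i_r ≤ n) and columns β_{i₁j₁}, …, β_{i_r j_r}. If 1 ≤ j₁ ≤ j₂ ≤ ⋯ ≤ j_r ≤ n, then det(S) = ∏_{a=1}^{r} f_{j_a}. In particular, S is lower triangular up to the structure of Jac₂(F). -/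
open MvPolynomial

theorem Matrix.det_eq_prod_diag_of_forall_perm_ne_one {R ι : Type*} [CommRing R] [Fintype ι]
    [DecidableEq ι] (M : Matrix ι ι R) (h : ∀ σ : Equiv.Perm ι, σ ≠ 1 → ∃ i, M (σ i) i = 0) :
    M.det = ∏ i, M i i := by
  rw [Matrix.det_apply, Finset.sum_eq_single 1]
  · simp
  · intro σ _ hσ
    obtain ⟨i, hi⟩ := h σ hσ
    rw [Finset.prod_eq_zero (f := fun j => M (σ j) j) (Finset.mem_univ i) hi, smul_zero]
  · simp

/-- If `σ` moves `m`, the largest point it moves, then both `σ m` and `σ⁻¹ m` lie below `m`,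
so `iv m = jv (σ⁻¹ m) ≤ jv m = iv (σ m) < iv m`. -/
theorem Equiv.Perm.eq_one_of_apply_ne_imp {ι α : Type*} [LinearOrder ι] [Fintype ι]
    [LinearOrder α] {iv jv : ι → α} (hi : StrictMono iv) (hj : Monotone jv)
    (σ : Equiv.Perm ι) (h : ∀ i, σ i ≠ i → iv (σ i) = jv i) : σ = 1 := by
  classical
  by_contra hσ
  have hne : σ.support.Nonempty :=
    Finset.nonempty_iff_ne_empty.mpr (mt Equiv.Perm.support_eq_empty_iff.mp hσ)
  set m := σ.support.max' hne
  have hm : m ∈ σ.support := σ.support.max'_mem hne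
  have hσm : σ m ∈ σ.support := Equiv.Perm.apply_mem_support.mpr hm
  have hσ'm : σ⁻¹ m ∈ σ.support := Equiv.Perm.apply_mem_support.mp (by simpa using hm)
  have hσm_lt : σ m < m :=
    (σ.support.le_max' _ hσm).lt_of_ne (Equiv.Perm.mem_support.mp hm)
  have hσ'm_lt : σ⁻¹ m < m := (σ.support.le_max' _ hσ'm).lt_of_ne fun h' =>
    Equiv.Perm.mem_support.mp hm (Equiv.Perm.inv_eq_iff_eq.mp h').symm
  have hm_eq : iv m = jv (σ⁻¹ m) := by
    simpa using h (σ⁻¹ m) (Equiv.Perm.mem_support.mp hσ'm)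
  have := hi hσm_lt
  rw [h m (Equiv.Perm.mem_support.mp hm), hm_eq] at this
  exact (hj hσ'm_lt.le).not_gt this

theorem jac2_succ_inr {n : ℕ} (F : MvPolynomial (Fin n) ℂ) (k i j : Fin n) :
    jac2 F k.succ (Sum.inr (i, j)) =
      if k = i then pderiv j F else if k = j then pderiv i F else 0 := by
  simp [jac2]

theorem stmt8 {n r : ℕ} (F : MvPolynomial (Fin n) ℂ) (iv jv : Fin r → Fin n)
    (hi : StrictMono iv) (hj : Monotone jv) :
    Matrix.det (Matrix.of fun a b : Fin r => jac2 F (iv a).succ (Sum.inr (iv b, jv b))) =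
      ∏ a : Fin r, pderiv (jv a) F := by
  refine (Matrix.det_eq_prod_diag_of_forall_perm_ne_one _ fun σ hσ => ?_).trans (by
    simp [jac2_succ_inr])
  by_contra! hσ_nonzero
  refine hσ (Equiv.Perm.eq_one_of_apply_ne_imp hi hj σ fun a ha => ?_)
  by_contra hne
  exact hσ_nonzero a (by simp [jac2_succ_inr, hi.injective.ne ha, hne])
end

section
/- Every monomial of degree n+1 in the first partial derivatives of F is a maximal minor of the second Jacobian matrix: for any 1 ≤ j₁ ≤ ⋯ ≤ j_{n+1} ≤ n, the product ∏_{a=1}^{n+1} f_{j_a} equals det of the (n+1)×(n+1) submatrix of Jac₂(F) with columns β_{0 j₁}, β_{1 j₂}, …, β_{n j_{n+1}}; hence J₁(F)^{n+1} ⊆ J₂(F). -/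
open MvPolynomial

/-!
The column `β_{0 j₁}` vanishes below row `β₀`, so the minor is `f_{j₁}` times the `n × n` block
on rows `β_1, …, β_n`, whose column `t` is nonzero only in rows `t` and `j_{t+1}`. Since
`t ↦ j_{t+1}` is monotone it has no cycles of length `≥ 2`, so the only permutation picking
nonzero entries of that block is the identity and its determinant is the diagonal product
`f_{j₂} ⋯ f_{j_{n+1}}`. Any product of `n + 1` partials can be sorted into this form, which gives
`J₁(F)^{n+1} ⊆ J₂(F)`.
-/

theorem Equiv.Perm.eq_one_of_forall_apply_eq_self_or_eq_monotone {ι : Type*} [Fintype ι]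
    [LinearOrder ι] {g : ι → ι} (hg : Monotone g) (σ : Equiv.Perm ι)
    (hσ : ∀ k, σ k = k ∨ σ k = g k) : σ = 1 := by
  by_contra hne
  have hmoved : ∀ k, σ k ≠ k → σ k = g k := fun k hk => (hσ k).resolve_left hk
  -- a largest moved point `t` is sent down by `g`, and so is its preimage, against monotonicity
  obtain ⟨t, ht, hmax⟩ := σ.support.exists_max_image id
    (Finset.nonempty_iff_ne_empty.2 (mt Equiv.Perm.support_eq_empty_iff.1 hne))
  rw [Equiv.Perm.mem_support] at ht
  have hmax' : ∀ s, σ s ≠ s → s ≤ t := fun s hs => hmax s (Equiv.Perm.mem_support.2 hs)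
  have hgt : g t < t := by
    refine lt_of_le_of_ne (not_lt.1 fun hlt => ?_) fun h => ht ((hmoved t ht).trans h)
    have hfix : σ (g t) = g t := by_contra fun h => (hmax' _ h).not_gt hlt
    exact ht ((hmoved t ht).trans (σ.injective (hfix.trans (hmoved t ht).symm)))
  set s := σ.symm t
  have hs : σ s = t := σ.apply_symm_apply t
  have hs_moved : σ s ≠ s := fun h => ht (h.symm.trans hs ▸ h)
  have hst : s < t := lt_of_le_of_ne (hmax' s hs_moved) (fun h => hs_moved (hs.trans h.symm))
  have hgs : g s = t := (hmoved s hs_moved).symm.trans hs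
  exact (hgs ▸ hg hst.le).not_gt hgt

theorem Matrix.det_eq_prod_diag_of_forall_ne_zero_diag_or_monotone {ι R : Type*} [Fintype ι]
    [LinearOrder ι] [CommRing R] (A : Matrix ι ι R) {g : ι → ι} (hg : Monotone g)
    (hA : ∀ i k, A i k ≠ 0 → i = k ∨ i = g k) : A.det = ∏ i, A i i := by
  rw [Matrix.det_apply, Finset.sum_eq_single 1 ?_ (by simp)]
  · simp
  intro σ _ hσ
  obtain ⟨k, hk⟩ : ∃ k, A (σ k) k = 0 := by
    by_contra! h
    exact hσ (σ.eq_one_of_forall_apply_eq_self_or_eq_monotone hg fun k => hA _ _ (h k))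
  rw [Finset.prod_eq_zero (f := fun i => A (σ i) i) (Finset.mem_univ k) hk, smul_zero]

theorem Matrix.det_succ_eq_mul_det_submatrix_of_column_zero {R : Type*} [CommRing R] {n : ℕ}
    (A : Matrix (Fin (n + 1)) (Fin (n + 1)) R) (hA : ∀ i, i ≠ 0 → A i 0 = 0) :
    A.det = A 0 0 * (A.submatrix Fin.succ Fin.succ).det := by
  rw [Matrix.det_succ_column_zero, Fin.sum_univ_succ, Finset.sum_eq_zero fun i _ => by
    simp [hA i.succ (Fin.succ_ne_zero i)]]
  simp

theorem det_jac2_submatrix_eq_prod {n : ℕ} (F : MvPolynomial (Fin n) ℂ)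
    (j : Fin (n + 1) → Fin n) (hj : Monotone j) :
    Matrix.det (Matrix.of fun a b => jac2 F a
        ((Fin.cases (Sum.inl (j 0)) (fun t : Fin n => Sum.inr (t, j t.succ)) :
          Fin (n + 1) → Fin n ⊕ Fin n × Fin n) b)) = ∏ b : Fin (n + 1), pderiv (j b) F := by
  rw [Matrix.det_succ_eq_mul_det_submatrix_of_column_zero _ fun i hi => by simp [jac2, hi],
    Matrix.det_eq_prod_diag_of_forall_ne_zero_diag_or_monotone _
      (hj.comp Fin.strictMono_succ.monotone),
    Fin.prod_univ_succ]
  · simp [jac2]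
  · intro s t h
    simp only [jac2, Matrix.submatrix_apply, Matrix.of_apply, Fin.cases_succ, Fin.succ_ne_zero,
      ↓reduceIte, Fin.succ_inj] at h
    split_ifs at h with hst hsj
    exacts [.inl hst, .inr hsj, absurd rfl h]

open Pointwise in
theorem Ideal.span_range_pow_le_of_forall_prod_mem {R ι : Type*} [CommSemiring R] {v : ι → R}
    {m : ℕ} {I : Ideal R} (h : ∀ g : Fin m → ι, ∏ b, v (g b) ∈ I) :
    Ideal.span (Set.range v) ^ m ≤ I := by
  rw [Ideal.span, Submodule.span_pow, Submodule.span_le]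
  intro x hx
  obtain ⟨f, rfl⟩ := Set.mem_pow.1 hx
  choose g hg using fun b => (f b).2
  simpa [List.prod_ofFn, ← hg] using h g

theorem prod_pderiv_mem_J2 {n : ℕ} (F : MvPolynomial (Fin n) ℂ) (g : Fin (n + 1) → Fin n) :
    ∏ b, pderiv (g b) F ∈ J2 F := by
  rw [← Equiv.prod_comp (Tuple.sort g)]
  exact det_jac2_submatrix_eq_prod F (g ∘ Tuple.sort g) (Tuple.monotone_sort g) ▸
    Ideal.subset_span ⟨_, rfl⟩

theorem stmt15 {n : ℕ} (F : MvPolynomial (Fin n) ℂ) (j : Fin (n + 1) → Fin n)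
    (hj : Monotone j) :
    Matrix.det (Matrix.of fun a b => jac2 F a
        ((Fin.cases (Sum.inl (j 0)) (fun t : Fin n => Sum.inr (t, j t.succ)) :
          Fin (n + 1) → Fin n ⊕ Fin n × Fin n) b)) = ∏ b : Fin (n + 1), pderiv (j b) F ∧
      J1 F ^ (n + 1) ≤ J2 F :=
  ⟨det_jac2_submatrix_eq_prod F j hj,
    Ideal.span_range_pow_le_of_forall_prod_mem (prod_pderiv_mem_J2 F)⟩
end

section
/- Chain rule identity for Q under composition: for a germ of biholomorphism φ : (ℂⁿ,0) → (ℂⁿ,0) and holomorphic F, each Q_{ij;kl}(F∘φ) lies in the ideal φ*(Q(F) + J₁(F)³), i.e. Q(F∘φ) ⊆ φ*(Q(F) + J₁(F)³). -/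
open MvPolynomial Finset

section helpers

variable {R : Type*} [CommRing R] {n : ℕ}

/-- quadruple sum -/
noncomputable def S4 {n : ℕ} (f : Fin n → Fin n → Fin n → Fin n → R) : R :=
  ∑ a, ∑ c, ∑ b, ∑ d, f a c b d

lemma S4_congr {f g : Fin n → Fin n → Fin n → Fin n → R}
    (h : ∀ a c b d, f a c b d = g a c b d) : S4 f = S4 g :=
  Finset.sum_congr rfl fun a _ => Finset.sum_congr rfl fun c _ =>
    Finset.sum_congr rfl fun b _ => Finset.sum_congr rfl fun d _ => h a c b d

lemma S4_swap_ac (f : Fin n → Fin n → Fin n → Fin n → R) :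
    S4 f = S4 (fun a c b d => f c a b d) :=
  Finset.sum_comm

lemma S4_swap_bd (f : Fin n → Fin n → Fin n → Fin n → R) :
    S4 f = S4 (fun a c b d => f a c d b) :=
  Finset.sum_congr rfl fun _ _ => Finset.sum_congr rfl fun _ _ => Finset.sum_comm

lemma S4_add (f g : Fin n → Fin n → Fin n → Fin n → R) :
    S4 (fun a c b d => f a c b d + g a c b d) = S4 f + S4 g := by
  simp [S4, Finset.sum_add_distrib]

lemma S4_sub (f g : Fin n → Fin n → Fin n → Fin n → R) :
    S4 (fun a c b d => f a c b d - g a c b d) = S4 f - S4 g := by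
  simp [S4, Finset.sum_sub_distrib]

lemma S4_neg (f : Fin n → Fin n → Fin n → Fin n → R) :
    S4 (fun a c b d => -f a c b d) = -S4 f := by
  simp [S4]

lemma tri (f : Fin n → Fin n → R) (p q : Fin n → R) :
    (∑ a, ∑ b, f a b) * (∑ c, p c) * (∑ d, q d)
      = S4 (fun a c b d => f a b * p c * q d) := by
  rw [Finset.sum_mul, Finset.sum_mul]
  refine Finset.sum_congr rfl fun a _ => ?_
  rw [Finset.sum_mul, Finset.sum_mul]
  refine Eq.trans (Finset.sum_congr rfl fun b _ => ?_) Finset.sum_comm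
  rw [mul_assoc, Finset.sum_mul_sum, Finset.mul_sum]
  refine Finset.sum_congr rfl fun c _ => ?_
  rw [Finset.mul_sum]
  exact Finset.sum_congr rfl fun d _ => by ring

/-- abstract master identity -/
lemma master (H : Fin n → Fin n → R) (g : Fin n → R) (A : Fin n → Fin n → R)
    (i j k l : Fin n) :
    S4 (fun a c b d =>
      (H a b * g c * g d - H c b * g a * g d - H a d * g c * g b + H c d * g a * g b)
        * (A i a * A j c - A j a * A i c) * (A k b * A l d - A l b * A k d))
    = 4 * ((∑ a, ∑ b, H a b * A i a * A k b) * (∑ c, g c * A j c) * (∑ d, g d * A l d)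
        - (∑ a, ∑ b, H a b * A j a * A k b) * (∑ c, g c * A i c) * (∑ d, g d * A l d)
        - (∑ a, ∑ b, H a b * A i a * A l b) * (∑ c, g c * A j c) * (∑ d, g d * A k d)
        + (∑ a, ∑ b, H a b * A j a * A l b) * (∑ c, g c * A i c) * (∑ d, g d * A k d)) := by
  set M : Fin n → Fin n → R := fun a c => A i a * A j c - A j a * A i c with hM
  set N : Fin n → Fin n → R := fun b d => A k b * A l d - A l b * A k d with hN
  set P : Fin n → Fin n → Fin n → Fin n → R :=
    fun a c b d => H a b * g c * g d * M a c * N b d with hP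
  have hMas : ∀ a c, M c a = -M a c := fun a c => by simp [hM]; ring
  have hNas : ∀ b d, N d b = -N b d := fun b d => by simp [hN]; ring
  have h2 : S4 (fun a c b d => H c b * g a * g d * M a c * N b d) = -S4 P := by
    rw [S4_swap_ac]
    rw [show (fun a c b d => (fun a c b d => H c b * g a * g d * M a c * N b d) c a b d)
        = fun a c b d => -P a c b d from funext fun a => funext fun c => funext fun b =>
          funext fun d => by simp only [hP]; rw [hMas a c]; ring]
    exact S4_neg P
  have h3 : S4 (fun a c b d => H a d * g c * g b * M a c * N b d) = -S4 P := by
    rw [S4_swap_bd]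
    rw [show (fun a c b d => (fun a c b d => H a d * g c * g b * M a c * N b d) a c d b)
        = fun a c b d => -P a c b d from funext fun a => funext fun c => funext fun b =>
          funext fun d => by simp only [hP]; rw [hNas b d]; ring]
    exact S4_neg P
  have h4 : S4 (fun a c b d => H c d * g a * g b * M a c * N b d) = S4 P := by
    rw [S4_swap_ac, S4_swap_bd]
    refine S4_congr fun a c b d => ?_
    simp only [hP]; rw [hMas a c, hNas b d]; ring
  have hsplit : S4 (fun a c b d =>
      (H a b * g c * g d - H c b * g a * g d - H a d * g c * g b + H c d * g a * g b)
        * M a c * N b d)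
      = S4 P - S4 (fun a c b d => H c b * g a * g d * M a c * N b d)
        - S4 (fun a c b d => H a d * g c * g b * M a c * N b d)
        + S4 (fun a c b d => H c d * g a * g b * M a c * N b d) := by
    rw [← S4_sub, ← S4_sub, ← S4_add]
    exact S4_congr fun a c b d => by simp only [hP]; ring
  have hPsum : S4 P
      = (∑ a, ∑ b, H a b * A i a * A k b) * (∑ c, g c * A j c) * (∑ d, g d * A l d)
        - (∑ a, ∑ b, H a b * A j a * A k b) * (∑ c, g c * A i c) * (∑ d, g d * A l d)
        - (∑ a, ∑ b, H a b * A i a * A l b) * (∑ c, g c * A j c) * (∑ d, g d * A k d)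
        + (∑ a, ∑ b, H a b * A j a * A l b) * (∑ c, g c * A i c) * (∑ d, g d * A k d) := by
    rw [tri (fun a b => H a b * A i a * A k b) (fun c => g c * A j c) (fun d => g d * A l d),
        tri (fun a b => H a b * A j a * A k b) (fun c => g c * A i c) (fun d => g d * A l d),
        tri (fun a b => H a b * A i a * A l b) (fun c => g c * A j c) (fun d => g d * A k d),
        tri (fun a b => H a b * A j a * A l b) (fun c => g c * A i c) (fun d => g d * A k d),
        ← S4_sub, ← S4_sub, ← S4_add]
    exact S4_congr fun a c b d => by simp only [hP, hM, hN]; ring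
  rw [hsplit, h2, h3, h4, hPsum]; ring

variable (σ : MvPolynomial (Fin n) ℂ ≃ₐ[ℂ] MvPolynomial (Fin n) ℂ)

lemma chain1 (F : MvPolynomial (Fin n) ℂ) (i : Fin n) :
    pderiv i (σ F) = ∑ a, σ (pderiv a F) * pderiv i (σ (X a)) := by
  induction F using MvPolynomial.induction_on with
  | C r =>
      simp [show σ (C r) = C r by
        simpa [MvPolynomial.algebraMap_eq] using σ.commutes r]
  | add p q hp hq =>
      simp only [map_add, hp, hq, add_mul, Finset.sum_add_distrib]
  | mul_X p j hp =>
      rw [map_mul, pderiv_mul, hp]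
      have : ∀ a : Fin n, σ (pderiv a (p * X j)) * pderiv i (σ (X a))
          = σ (pderiv a p) * pderiv i (σ (X a)) * σ (X j)
            + (if a = j then σ p * pderiv i (σ (X a)) else 0) := by
        intro a
        rw [pderiv_mul, map_add, map_mul, add_mul]
        rcases eq_or_ne a j with h | h
        · subst h
          rw [if_pos rfl, pderiv_X_self, mul_one]
          ring
        · rw [if_neg h, pderiv_X_of_ne (Ne.symm h), mul_zero, map_zero]
          ring
      rw [Finset.sum_congr rfl fun a _ => this a, Finset.sum_add_distrib,
          Finset.sum_ite_eq' Finset.univ j (fun a => σ p * pderiv i (σ (X a)))]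
      simp [Finset.sum_mul]

end helpers

section more
variable {n : ℕ} (σ : MvPolynomial (Fin n) ℂ ≃ₐ[ℂ] MvPolynomial (Fin n) ℂ)

lemma chain2 (F : MvPolynomial (Fin n) ℂ) (u v : Fin n) :
    pderiv u (pderiv v (σ F))
      = (∑ a, ∑ b, σ (pderiv a (pderiv b F)) * pderiv u (σ (X a)) * pderiv v (σ (X b)))
        + ∑ b, σ (pderiv b F) * pderiv u (pderiv v (σ (X b))) := by
  rw [chain1 σ F v, map_sum]
  have h1 : ∀ b : Fin n, pderiv u (σ (pderiv b F) * pderiv v (σ (X b)))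
      = (∑ a, σ (pderiv a (pderiv b F)) * pderiv u (σ (X a)) * pderiv v (σ (X b)))
        + σ (pderiv b F) * pderiv u (pderiv v (σ (X b))) := by
    intro b
    rw [pderiv_mul, chain1 σ (pderiv b F) u, Finset.sum_mul]
  rw [Finset.sum_congr rfl fun b _ => h1 b, Finset.sum_add_distrib, Finset.sum_comm]

lemma S4_mem {I : Ideal (MvPolynomial (Fin n) ℂ)}
    {f : Fin n → Fin n → Fin n → Fin n → MvPolynomial (Fin n) ℂ}
    (h : ∀ a c b d, f a c b d ∈ I) : S4 f ∈ I :=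
  Ideal.sum_mem _ fun a _ => Ideal.sum_mem _ fun c _ =>
    Ideal.sum_mem _ fun b _ => Ideal.sum_mem _ fun d _ => h a c b d

lemma key (F : MvPolynomial (Fin n) ℂ) (i j k l : Fin n) :
    Qq (σ F) i j k l
      = C (4⁻¹ : ℂ) * S4 (fun a c b d => σ (Qq F a c b d)
          * (pderiv i (σ (X a)) * pderiv j (σ (X c)) - pderiv j (σ (X a)) * pderiv i (σ (X c)))
          * (pderiv k (σ (X b)) * pderiv l (σ (X d)) - pderiv l (σ (X b)) * pderiv k (σ (X d))))
        + ((∑ b, σ (pderiv b F) * pderiv i (pderiv k (σ (X b)))) * pderiv j (σ F) * pderiv l (σ F)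
          - (∑ b, σ (pderiv b F) * pderiv j (pderiv k (σ (X b)))) * pderiv i (σ F) * pderiv l (σ F)
          - (∑ b, σ (pderiv b F) * pderiv i (pderiv l (σ (X b)))) * pderiv j (σ F) * pderiv k (σ F)
          + (∑ b, σ (pderiv b F) * pderiv j (pderiv l (σ (X b)))) * pderiv i (σ F) * pderiv k (σ F)) := by
  have hσQ : ∀ a c b d : Fin n, σ (Qq F a c b d)
      = σ (pderiv a (pderiv b F)) * σ (pderiv c F) * σ (pderiv d F)
        - σ (pderiv c (pderiv b F)) * σ (pderiv a F) * σ (pderiv d F)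
        - σ (pderiv a (pderiv d F)) * σ (pderiv c F) * σ (pderiv b F)
        + σ (pderiv c (pderiv d F)) * σ (pderiv a F) * σ (pderiv b F) := by
    intro a c b d
    simp only [Qq, pd, pd2, map_sub, map_add, map_mul]
  have hexpQ : S4 (fun a c b d => σ (Qq F a c b d)
        * (pderiv i (σ (X a)) * pderiv j (σ (X c)) - pderiv j (σ (X a)) * pderiv i (σ (X c)))
        * (pderiv k (σ (X b)) * pderiv l (σ (X d)) - pderiv l (σ (X b)) * pderiv k (σ (X d))))
      = 4 * ((∑ a, ∑ b, σ (pderiv a (pderiv b F)) * pderiv i (σ (X a)) * pderiv k (σ (X b)))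
            * (∑ c, σ (pderiv c F) * pderiv j (σ (X c))) * (∑ d, σ (pderiv d F) * pderiv l (σ (X d)))
          - (∑ a, ∑ b, σ (pderiv a (pderiv b F)) * pderiv j (σ (X a)) * pderiv k (σ (X b)))
            * (∑ c, σ (pderiv c F) * pderiv i (σ (X c))) * (∑ d, σ (pderiv d F) * pderiv l (σ (X d)))
          - (∑ a, ∑ b, σ (pderiv a (pderiv b F)) * pderiv i (σ (X a)) * pderiv l (σ (X b)))
            * (∑ c, σ (pderiv c F) * pderiv j (σ (X c))) * (∑ d, σ (pderiv d F) * pderiv k (σ (X d)))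
          + (∑ a, ∑ b, σ (pderiv a (pderiv b F)) * pderiv j (σ (X a)) * pderiv l (σ (X b)))
            * (∑ c, σ (pderiv c F) * pderiv i (σ (X c))) * (∑ d, σ (pderiv d F) * pderiv k (σ (X d)))) :=
    (S4_congr fun a c b d => by rw [hσQ a c b d]).trans
      (master (fun a b => σ (pderiv a (pderiv b F))) (fun c => σ (pderiv c F))
        (fun u a => pderiv u (σ (X a))) i j k l)
  have hC : (C (4⁻¹ : ℂ) * 4 : MvPolynomial (Fin n) ℂ) = 1 := by
    rw [show (4 : MvPolynomial (Fin n) ℂ) = C (4 : ℂ) from (map_ofNat C 4).symm, ← C_mul]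
    norm_num
  have hS : C (4⁻¹ : ℂ) * S4 (fun a c b d => σ (Qq F a c b d)
        * (pderiv i (σ (X a)) * pderiv j (σ (X c)) - pderiv j (σ (X a)) * pderiv i (σ (X c)))
        * (pderiv k (σ (X b)) * pderiv l (σ (X d)) - pderiv l (σ (X b)) * pderiv k (σ (X d))))
      = ((∑ a, ∑ b, σ (pderiv a (pderiv b F)) * pderiv i (σ (X a)) * pderiv k (σ (X b)))
            * (∑ c, σ (pderiv c F) * pderiv j (σ (X c))) * (∑ d, σ (pderiv d F) * pderiv l (σ (X d)))
          - (∑ a, ∑ b, σ (pderiv a (pderiv b F)) * pderiv j (σ (X a)) * pderiv k (σ (X b)))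
            * (∑ c, σ (pderiv c F) * pderiv i (σ (X c))) * (∑ d, σ (pderiv d F) * pderiv l (σ (X d)))
          - (∑ a, ∑ b, σ (pderiv a (pderiv b F)) * pderiv i (σ (X a)) * pderiv l (σ (X b)))
            * (∑ c, σ (pderiv c F) * pderiv j (σ (X c))) * (∑ d, σ (pderiv d F) * pderiv k (σ (X d)))
          + (∑ a, ∑ b, σ (pderiv a (pderiv b F)) * pderiv j (σ (X a)) * pderiv l (σ (X b)))
            * (∑ c, σ (pderiv c F) * pderiv i (σ (X c))) * (∑ d, σ (pderiv d F) * pderiv k (σ (X d)))) := by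
    rw [hexpQ, ← mul_assoc, hC, one_mul]
  have hQdef : Qq (σ F) i j k l
      = pderiv i (pderiv k (σ F)) * pderiv j (σ F) * pderiv l (σ F)
        - pderiv j (pderiv k (σ F)) * pderiv i (σ F) * pderiv l (σ F)
        - pderiv i (pderiv l (σ F)) * pderiv j (σ F) * pderiv k (σ F)
        + pderiv j (pderiv l (σ F)) * pderiv i (σ F) * pderiv k (σ F) := rfl
  rw [hQdef, chain2 σ F i k, chain2 σ F j k, chain2 σ F i l, chain2 σ F j l,
      chain1 σ F i, chain1 σ F j, chain1 σ F k, chain1 σ F l, hS]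
  ring

end more

theorem stmt18 {n : ℕ} (F : MvPolynomial (Fin n) ℂ)
    (σ : MvPolynomial (Fin n) ℂ ≃ₐ[ℂ] MvPolynomial (Fin n) ℂ)
    (h0 : ∀ i : Fin n, constantCoeff (σ (X i)) = 0) :
    QI (σ F) ≤ Ideal.map (σ : MvPolynomial (Fin n) ℂ →+* MvPolynomial (Fin n) ℂ)
      (QI F ⊔ J1 F ^ 3) := by
  classical
  rw [QI, Ideal.span_le]
  rintro q ⟨i, j, k, l, rfl⟩
  simp only [SetLike.mem_coe]
  set σ' : MvPolynomial (Fin n) ℂ →+* MvPolynomial (Fin n) ℂ :=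
    (σ : MvPolynomial (Fin n) ℂ →+* MvPolynomial (Fin n) ℂ) with hσ'
  have hQle : Ideal.map σ' (QI F) ≤ Ideal.map σ' (QI F ⊔ J1 F ^ 3) :=
    Ideal.map_mono le_sup_left
  have hJle : (Ideal.map σ' (J1 F)) ^ 3 ≤ Ideal.map σ' (QI F ⊔ J1 F ^ 3) := by
    rw [← Ideal.map_pow]
    exact Ideal.map_mono le_sup_right
  have hg : ∀ a : Fin n, σ (pderiv a F) ∈ Ideal.map σ' (J1 F) := fun a =>
    Ideal.mem_map_of_mem σ' (Ideal.subset_span ⟨a, rfl⟩)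
  have hr : ∀ u : Fin n, pderiv u (σ F) ∈ Ideal.map σ' (J1 F) := by
    intro u
    rw [chain1 σ F u]
    exact Ideal.sum_mem _ fun a _ => Ideal.mul_mem_right _ _ (hg a)
  have hT : ∀ u v : Fin n,
      (∑ b, σ (pderiv b F) * pderiv u (pderiv v (σ (X b)))) ∈ Ideal.map σ' (J1 F) :=
    fun u v => Ideal.sum_mem _ fun b _ => Ideal.mul_mem_right _ _ (hg b)
  have hQq : ∀ a c b d : Fin n, σ (Qq F a c b d) ∈ Ideal.map σ' (QI F) := fun a c b d =>
    Ideal.mem_map_of_mem σ' (Ideal.subset_span ⟨a, c, b, d, rfl⟩)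
  have cube : ∀ x y z : MvPolynomial (Fin n) ℂ, x ∈ Ideal.map σ' (J1 F) →
      y ∈ Ideal.map σ' (J1 F) → z ∈ Ideal.map σ' (J1 F) →
      x * y * z ∈ (Ideal.map σ' (J1 F)) ^ 3 := by
    intro x y z hx hy hz
    have h3 : ((Ideal.map σ' (J1 F)) ^ 3 : Ideal (MvPolynomial (Fin n) ℂ))
        = Ideal.map σ' (J1 F) * Ideal.map σ' (J1 F) * Ideal.map σ' (J1 F) := by
      rw [pow_succ, pow_succ, pow_one]
    rw [h3]
    exact Ideal.mul_mem_mul (Ideal.mul_mem_mul hx hy) hz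
  rw [key σ F i j k l]
  refine Ideal.add_mem _ ?_ ?_
  · refine Ideal.mul_mem_left _ _ (hQle (S4_mem fun a c b d => ?_))
    exact Ideal.mul_mem_right _ _ (Ideal.mul_mem_right _ _ (hQq a c b d))
  · refine Ideal.add_mem _ (Ideal.sub_mem _ (Ideal.sub_mem _ ?_ ?_) ?_) ?_ <;>
      exact hJle (cube _ _ _ (hT _ _) (hr _) (hr _))
end
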